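/- Corollary on unbroken Poisson-Lie symmetry: fix ρ ∈ M_{n²}(ℝ), μ ∈ ℝ with μ ≠ 0, and f ∈ M_n(ℝ). The following are equivalent: (i) [f⊗f, ρ] = 0 in M_{n²}(ℝ); (ii) for every commutative ℝ-algebra A equipped with an ℝ-bilinear antisymmetric Leibniz bracket and every g ∈ M_n(A) satisfying the Sklyanin relation {g₁, g₂} = μ(g₁g₂ρ − ρg₁g₂), the right-translated matrix g' = g f (with f regarded as a constant matrix in M_n(A)) also satisfies {g'₁, g'₂} = μ(g'₁g'₂ρ − ρg'₁g'₂). In other words, right translation by f is a symplectomorphism if and only if [f⊗f, ρ] = 0. -/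

import Mathlib

open Matrix Kronecker TensorProduct

noncomputable section

/-- An ℝ-bilinear antisymmetric bracket on a commutative ℝ-algebra `C` satisfying the
Leibniz rule in each argument (by antisymmetry, left ℝ-linearity and the Leibniz rule in
the second argument give the corresponding properties in the first argument). -/
structure PoissonBracketOn (C : Type*) [CommRing C] [Algebra ℝ C] where
  br : C → C → C
  add_left : ∀ x y z : C, br (x + y) z = br x z + br y z
  smul_left : ∀ (r : ℝ) (x y : C), br (r • x) y = r • br x y
  antisymm : ∀ x y : C, br x y = -br y x
  leibniz : ∀ x y z : C, br x (y * z) = br x y * z + y * br x z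

/-- The matrix of brackets `({M₁,N₂})_{(i,k),(j,l)} = {M_{ij}, N_{kl}}` in `M_{n²}(C)`. -/
def brMat {n : ℕ} {C : Type*} (br : C → C → C) (M N : Matrix (Fin n) (Fin n) C) :
    Matrix (Fin n × Fin n) (Fin n × Fin n) C :=
  Matrix.of fun p q => br (M p.1 q.1) (N p.2 q.2)

/-- The Kronecker embedding `M₁ = M ⊗ 1ₙ` of `M_n(C)` into `M_{n²}(C)`. -/
def emb1 {n : ℕ} {C : Type*} [CommRing C] (M : Matrix (Fin n) (Fin n) C) :
    Matrix (Fin n × Fin n) (Fin n × Fin n) C :=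
  M ⊗ₖ (1 : Matrix (Fin n) (Fin n) C)

/-- The Kronecker embedding `N₂ = 1ₙ ⊗ N` of `M_n(C)` into `M_{n²}(C)`. -/
def emb2 {n : ℕ} {C : Type*} [CommRing C] (N : Matrix (Fin n) (Fin n) C) :
    Matrix (Fin n × Fin n) (Fin n × Fin n) C :=
  (1 : Matrix (Fin n) (Fin n) C) ⊗ₖ N

/-- A constant matrix over `ℝ` regarded as a matrix over the ℝ-algebra `C`. -/
def constM {m : Type*} {C : Type*} [CommRing C] [Algebra ℝ C] (ρ : Matrix m m ℝ) :
    Matrix m m C :=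
  ρ.map (algebraMap ℝ C)

/-- The Sklyanin bracket relation `{g₁, g₂} = μ(g₁g₂ρ − ρg₁g₂)` with r-matrix `ρ` and
scaling `μ`. -/
def SklyaninRel {n : ℕ} {C : Type*} [CommRing C] [Algebra ℝ C] (br : C → C → C) (μ : ℝ)
    (ρ : Matrix (Fin n × Fin n) (Fin n × Fin n) ℝ) (g : Matrix (Fin n) (Fin n) C) : Prop :=
  brMat br g g = μ • (emb1 g * emb2 g * constM ρ - constM ρ * (emb1 g * emb2 g))

section Aux

variable {C : Type*} [CommRing C] [Algebra ℝ C] (P : PoissonBracketOn C)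

lemma PB_one_right (x : C) : P.br x 1 = 0 := by
  have h := P.leibniz x 1 1
  rw [one_mul, mul_one, one_mul] at h
  exact (left_eq_add.mp h)

lemma PB_smul_right (r : ℝ) (x y : C) : P.br x (r • y) = r • P.br x y := by
  rw [P.antisymm, P.smul_left, P.antisymm y x, smul_neg, neg_neg]

lemma PB_add_right (x y z : C) : P.br x (y + z) = P.br x y + P.br x z := by
  rw [P.antisymm, P.add_left, P.antisymm y x, P.antisymm z x, neg_add, neg_neg, neg_neg]

lemma PB_const_right (x : C) (r : ℝ) : P.br x (algebraMap ℝ C r) = 0 := by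
  rw [Algebra.algebraMap_eq_smul_one, PB_smul_right, PB_one_right, smul_zero]

lemma PB_mul_const_right (x y : C) (r : ℝ) :
    P.br x (y * algebraMap ℝ C r) = P.br x y * algebraMap ℝ C r := by
  rw [P.leibniz, PB_const_right, mul_zero, add_zero]

lemma PB_mul_const_left (x y : C) (r : ℝ) :
    P.br (x * algebraMap ℝ C r) y = P.br x y * algebraMap ℝ C r := by
  rw [P.antisymm, PB_mul_const_right, P.antisymm y x, neg_mul, neg_neg]

lemma PB_zero_right (x : C) : P.br x 0 = 0 := by
  calc P.br x 0 = P.br x ((0 : ℝ) • (0 : C)) := by rw [zero_smul]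
    _ = 0 := by rw [PB_smul_right, zero_smul]

lemma PB_zero_left (x : C) : P.br 0 x = 0 := by
  rw [P.antisymm, PB_zero_right, neg_zero]

lemma PB_sum_right {ι : Type*} (s : Finset ι) (x : C) (y : ι → C) :
    P.br x (∑ i ∈ s, y i) = ∑ i ∈ s, P.br x (y i) := by
  classical
  induction s using Finset.induction_on with
  | empty => simp [PB_zero_right]
  | insert _ _ h ih => rw [Finset.sum_insert h, Finset.sum_insert h, PB_add_right, ih]

lemma PB_sum_left {ι : Type*} (s : Finset ι) (x : C) (y : ι → C) :
    P.br (∑ i ∈ s, y i) x = ∑ i ∈ s, P.br (y i) x := by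
  classical
  induction s using Finset.induction_on with
  | empty => simp [PB_zero_left]
  | insert _ _ h ih => rw [Finset.sum_insert h, Finset.sum_insert h, P.add_left, ih]

variable {n : ℕ}

lemma emb1_mul (M N : Matrix (Fin n) (Fin n) C) : emb1 (M * N) = emb1 M * emb1 N := by
  unfold emb1
  rw [← Matrix.mul_kronecker_mul, one_mul]

lemma emb2_mul (M N : Matrix (Fin n) (Fin n) C) : emb2 (M * N) = emb2 M * emb2 N := by
  unfold emb2
  rw [← Matrix.mul_kronecker_mul, one_mul]

lemma emb1_mul_emb2 (M N : Matrix (Fin n) (Fin n) C) : emb1 M * emb2 N = M ⊗ₖ N := by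
  unfold emb1 emb2
  rw [← Matrix.mul_kronecker_mul, one_mul, mul_one]

lemma emb2_mul_emb1 (M N : Matrix (Fin n) (Fin n) C) : emb2 N * emb1 M = M ⊗ₖ N := by
  unfold emb1 emb2
  rw [← Matrix.mul_kronecker_mul, one_mul, mul_one]

lemma constM_kron (M N : Matrix (Fin n) (Fin n) ℝ) :
    (constM M : Matrix (Fin n) (Fin n) C) ⊗ₖ constM N = constM (M ⊗ₖ N) := by
  ext p q
  simp [constM, Matrix.kroneckerMap_apply, _root_.map_mul]

lemma constM_mul {m : Type*} [Fintype m] (M N : Matrix m m ℝ) :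
    (constM (M * N) : Matrix m m C) = constM M * constM N :=
  Matrix.map_mul

lemma brMat_mul_const (g : Matrix (Fin n) (Fin n) C) (f : Matrix (Fin n) (Fin n) ℝ) :
    brMat P.br (g * constM f) (g * constM f) = brMat P.br g g * constM (f ⊗ₖ f) := by
  ext p q
  obtain ⟨i, k⟩ := p
  obtain ⟨j, l⟩ := q
  simp only [brMat, Matrix.mul_apply, Matrix.of_apply, constM, Matrix.map_apply,
    Matrix.kroneckerMap_apply]
  rw [PB_sum_left, Fintype.sum_prod_type]
  refine Finset.sum_congr rfl fun a _ => ?_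
  rw [PB_mul_const_left, PB_sum_right, Finset.sum_mul]
  refine Finset.sum_congr rfl fun b _ => ?_
  rw [PB_mul_const_right, _root_.map_mul]
  ring

end Aux

/-- Corollary on unbroken Poisson-Lie symmetry: for `μ ≠ 0`, the constant matrix
`f ∈ M_n(ℝ)` satisfies `[f⊗f, ρ] = 0` if and only if for every commutative ℝ-algebra `A`
with an ℝ-bilinear antisymmetric Leibniz bracket and every `g ∈ M_n(A)` satisfying the
Sklyanin relation, the right-translated matrix `g' = g f` also satisfies the Sklyanin
relation; i.e. right translation by `f` is a symplectomorphism iff `[f⊗f, ρ] = 0`. -/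
theorem unbroken_poissonLie_symmetry {n : ℕ}
    (ρ : Matrix (Fin n × Fin n) (Fin n × Fin n) ℝ) (μ : ℝ) (hμ : μ ≠ 0)
    (f : Matrix (Fin n) (Fin n) ℝ) :
    (f ⊗ₖ f) * ρ - ρ * (f ⊗ₖ f) = 0 ↔
      ∀ (A : Type) [CommRing A] [Algebra ℝ A] (PA : PoissonBracketOn A)
        (g : Matrix (Fin n) (Fin n) A), SklyaninRel PA.br μ ρ g →
          SklyaninRel PA.br μ ρ (g * constM f) := by
  constructor
  · intro h A _ _ PA g hg
    have hcomm : (f ⊗ₖ f) * ρ = ρ * (f ⊗ₖ f) := sub_eq_zero.mp h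
    have hΦρ : (constM (f ⊗ₖ f) : Matrix (Fin n × Fin n) (Fin n × Fin n) A) * constM ρ
        = constM ρ * constM (f ⊗ₖ f) := by
      rw [← constM_mul, ← constM_mul, hcomm]
    have hG' : emb1 (g * constM f) * emb2 (g * constM f)
        = emb1 g * emb2 g * constM (f ⊗ₖ f) := by
      rw [emb1_mul, emb2_mul]
      calc emb1 g * emb1 (constM f) * (emb2 g * emb2 (constM f))
          = emb1 g * (emb1 (constM f) * emb2 g) * emb2 (constM f) := by
            simp only [mul_assoc]
        _ = emb1 g * (emb2 g * emb1 (constM f)) * emb2 (constM f) := by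
            rw [emb1_mul_emb2 (constM f) g, emb2_mul_emb1 (constM f) g]
        _ = emb1 g * emb2 g * (emb1 (constM f) * emb2 (constM f)) := by
            simp only [mul_assoc]
        _ = emb1 g * emb2 g * constM (f ⊗ₖ f) := by
            rw [emb1_mul_emb2 (constM f) (constM f), constM_kron]
    unfold SklyaninRel at hg ⊢
    rw [brMat_mul_const, hg, hG']
    rw [Matrix.smul_mul, sub_mul]
    congr 1
    congr 1
    · rw [mul_assoc (emb1 g * emb2 g) (constM ρ), ← hΦρ, ← mul_assoc]
    · rw [mul_assoc]
  · intro H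
    set P0 : PoissonBracketOn ℝ :=
      ⟨fun _ _ => 0, by simp, by simp, by simp, by simp⟩ with hP0
    have hg1 : SklyaninRel P0.br μ ρ (1 : Matrix (Fin n) (Fin n) ℝ) := by
      unfold SklyaninRel
      have h1 : emb1 (1 : Matrix (Fin n) (Fin n) ℝ) * emb2 1 = 1 := by
        rw [emb1_mul_emb2, Matrix.one_kronecker_one]
      rw [h1, one_mul, mul_one, sub_self, smul_zero]
      ext p q
      simp [brMat, hP0]
    have h2 := H ℝ P0 1 hg1
    unfold SklyaninRel at h2
    have hbz : brMat P0.br (1 * constM f) (1 * constM f) = 0 := by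
      ext p q
      simp [brMat, hP0]
    rw [hbz, one_mul] at h2
    have hc : (constM f : Matrix (Fin n) (Fin n) ℝ) = f := by
      ext i j
      simp [constM]
    have hce : ∀ M : Matrix (Fin n × Fin n) (Fin n × Fin n) ℝ, constM M = M := by
      intro M; ext p q; simp [constM]
    rw [emb1_mul_emb2, hc, hce] at h2
    have := h2.symm
    rw [smul_eq_zero] at this
    exact this.resolve_left hμ
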